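/- Let Σ₁, Σ₂ be sets and L_i = MO_{Σ_i} (the simple closure space containing only ∅, Σ_i and singletons). Then L₁∘L₂ := (L₁ ⊼ L₂) ∪ {R ⊆ Σ₁×Σ₂ | |R| = 3 and distinct elements of R differ in both coordinates} is a weak tensor product of L₁ and L₂ that has the covering property. -/

import Mathlib

open Set

/-- A simple closure space on `σ`: a family of subsets closed under arbitrary
intersections (the empty intersection giving `univ`), containing `∅` and all singletons. -/
def IsSCS {σ : Type*} (L : Set (Set σ)) : Prop :=
  (∀ ω ⊆ L, ⋂₀ ω ∈ L) ∧ (∅ : Set σ) ∈ L ∧ ∀ p : σ, {p} ∈ L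

/-- The join of a subset `A` of atoms/points in a simple closure space `L`. -/
def sJoin {σ : Type*} (L : Set (Set σ)) (A : Set σ) : Set σ := ⋂₀ {b ∈ L | A ⊆ b}

/-- `b` covers `a` in `L`. -/
def CoversIn {σ : Type*} (L : Set (Set σ)) (a b : Set σ) : Prop :=
  a ⊂ b ∧ ∀ c ∈ L, a ⊆ c → c ⊆ b → c = a ∨ c = b

/-- `x` is a coatom of `L`. -/
def IsCoatomOf {σ : Type*} (L : Set (Set σ)) (x : Set σ) : Prop :=
  x ∈ L ∧ x ≠ univ ∧ ∀ c ∈ L, x ⊆ c → c = x ∨ c = univ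

/-- `L` is coatomistic: every element is a meet of coatoms. -/
def Coatomistic {σ : Type*} (L : Set (Set σ)) : Prop :=
  ∀ a ∈ L, a = ⋂₀ {x | IsCoatomOf L x ∧ a ⊆ x}

/-- Covering property: for any atom `p` and `a ∈ L` with `p ∧ a = 0`,
`p ∨ a` covers `a`. -/
def HasCovProp {σ : Type*} (L : Set (Set σ)) : Prop :=
  ∀ p : σ, ∀ a ∈ L, p ∉ a → CoversIn L a (sJoin L (insert p a))

/-- Covering property of the dual lattice of `L`. -/
def HasDualCovProp {σ : Type*} (L : Set (Set σ)) : Prop :=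
  ∀ x, IsCoatomOf L x → ∀ a ∈ L, sJoin L (x ∪ a) = univ → CoversIn L (x ∩ a) a

/-- `f` is an orthocomplementation of `L`: an order-reversing involution with
`a ∨ f a = 1` for all `a ∈ L`. -/
def IsOrthoOn {σ : Type*} (L : Set (Set σ)) (f : Set σ → Set σ) : Prop :=
  (∀ a ∈ L, f a ∈ L) ∧ (∀ a ∈ L, f (f a) = a) ∧
  (∀ a ∈ L, ∀ b ∈ L, a ⊆ b → f b ⊆ f a) ∧
  (∀ a ∈ L, ∀ b ∈ L, a ∪ f a ⊆ b → b = univ)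

/-- The permutation `g` of the points induces an automorphism of `L`. -/
def IsAutoOn {σ : Type*} (L : Set (Set σ)) (g : Equiv.Perm σ) : Prop :=
  ∀ a, a ∈ L ↔ g '' a ∈ L

/-- `L` contains `MO₃`: three distinct atoms `p, q, r` such that `p ∨ q`
covers each of them. -/
def ContainsMO3 {σ : Type*} (L : Set (Set σ)) : Prop :=
  ∃ p q r : σ, p ≠ q ∧ p ≠ r ∧ q ≠ r ∧
    CoversIn L {p} (sJoin L {p, q}) ∧ CoversIn L {q} (sJoin L {p, q}) ∧
    CoversIn L {r} (sJoin L {p, q})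

/-- `L` contains `MO₄`: four distinct atoms `p, q, r, s` such that `p ∨ q`
covers each of them. -/
def ContainsMO4 {σ : Type*} (L : Set (Set σ)) : Prop :=
  ∃ p q r s : σ, p ≠ q ∧ p ≠ r ∧ p ≠ s ∧ q ≠ r ∧ q ≠ s ∧ r ≠ s ∧
    CoversIn L {p} (sJoin L {p, q}) ∧ CoversIn L {q} (sJoin L {p, q}) ∧
    CoversIn L {r} (sJoin L {p, q}) ∧ CoversIn L {s} (sJoin L {p, q})

/-- A connected covering of the point set of `L`. -/
def IsConnCover {σ : Type*} (L : Set (Set σ)) (𝒜 : Set (Set σ)) : Prop :=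
  ⋃₀ 𝒜 = Set.univ ∧
  (∀ A ∈ 𝒜, ∃ p q : σ, p ∈ A ∧ q ∈ A ∧ p ≠ q) ∧
  (∀ A ∈ 𝒜, ∀ p ∈ A, ∀ q ∈ A, p ≠ q → ∃ r, r ∈ sJoin L {p, q} ∧ r ≠ p ∧ r ≠ q) ∧
  (∀ p q : σ, ∃ n : ℕ, ∃ c : Fin (n + 1) → Set σ, (∀ i, c i ∈ 𝒜) ∧
    p ∈ c 0 ∧ q ∈ c (Fin.last n) ∧
    ∀ i : Fin n, ∃ x y : σ, x ≠ y ∧ (x ∈ c i.castSucc ∧ x ∈ c i.succ) ∧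
      (y ∈ c i.castSucc ∧ y ∈ c i.succ))

/-- `L` is weakly connected: `L ≠ 2` and there is a connected covering. -/
def WeaklyConnected {σ : Type*} (L : Set (Set σ)) : Prop :=
  (∃ p q : σ, p ≠ q) ∧ ∃ 𝒜, IsConnCover L 𝒜

/-- Restriction of `L` to the subset `e`, as a family of subsets of `↥e`. -/
def restrictCS {σ : Type*} (L : Set (Set σ)) (e : Set σ) : Set (Set e) :=
  {B | ∃ a ∈ L, a ⊆ e ∧ B = Subtype.val ⁻¹' a}

/-- Center of an orthocomplemented simple closure space: elements whose
orthocomplement is the set complement. -/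
def centerOf {σ : Type*} (L : Set (Set σ)) (f : Set σ → Set σ) : Set (Set σ) :=
  {a ∈ L | f a = aᶜ}

/-- Central cover of a point `p`. -/
def centralCover {σ : Type*} (L : Set (Set σ)) (f : Set σ → Set σ) (p : σ) : Set σ :=
  ⋂₀ {a ∈ centerOf L f | p ∈ a}

section Family

variable {Ω : Type*} {X : Ω → Type*}

/-- `⋃_α π_α⁻¹ (a α)`. -/
def cylUnion (a : ∀ α, Set (X α)) : Set (∀ α, X α) := {p | ∃ α, p α ∈ a α}

/-- `p[B, β]`: the point `p` with its `β`-th coordinate varying over `B`. -/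
def pSub (p : ∀ α, X α) (β : Ω) (B : Set (X β)) : Set (∀ α, X α) :=
  {q | q β ∈ B ∧ ∀ α, α ≠ β → q α = p α}

/-- The section `R_β[p]` of `R ⊆ ∏_α X α`. -/
def sect (R : Set (∀ α, X α)) (β : Ω) (p : ∀ α, X α) : Set (X β) :=
  {q | ∃ r ∈ R, r β = q ∧ ∀ α, α ≠ β → r α = p α}

/-- The box product `⊼_α L_α`: all nonempty intersections of the sets
`⋃_α π_α⁻¹ (a α)`. -/
def boxProd (L : ∀ α, Set (Set (X α))) : Set (Set (∀ α, X α)) :=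
  {A | ∃ ω ⊆ {B | ∃ a : ∀ α, Set (X α), (∀ α, a α ∈ L α) ∧ B = cylUnion a},
    ω.Nonempty ∧ A = ⋂₀ ω}

/-- The Fraser product `⊻_α L_α`: all `R` whose sections all lie in the factors. -/
def fraserProd (L : ∀ α, Set (Set (X α))) : Set (Set (∀ α, X α)) :=
  {R | ∀ β, ∀ p : ∀ α, X α, sect R β p ∈ L β}

/-- `M` is a weak tensor product of the family `L`: axioms P1–P3. -/
def IsWTP (L : ∀ α, Set (Set (X α))) (M : Set (Set (∀ α, X α))) : Prop :=
  IsSCS M ∧ (∀ a : ∀ α, Set (X α), (∀ α, a α ∈ L α) → cylUnion a ∈ M) ∧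
  (∀ p : ∀ α, X α, ∀ β, ∀ B : Set (X β), pSub p β B ∈ M → B ∈ L β)

/-- The closure operator `⋁_β R = ⋃_p p[⋁ R_β[p]]`. -/
def vJoin (L : ∀ α, Set (Set (X α))) (β : Ω) (R : Set (∀ α, X α)) : Set (∀ α, X α) :=
  ⋃ p : ∀ α, X α, pSub p β (sJoin (L β) (sect R β p))

/-- The orthocomplementation `#` induced on the box product by
orthocomplementations of the factors. -/
def sharp (f : ∀ α, Set (X α) → Set (X α)) (a : Set (∀ α, X α)) : Set (∀ α, X α) :=
  {p | ∀ q ∈ a, ∃ α, p α ∈ f α {q α}}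

end Family

section Binary

variable {X₁ X₂ : Type*}

/-- `a₁ × Σ₂ ∪ Σ₁ × a₂`. -/
def cylUnion₂ (a₁ : Set X₁) (a₂ : Set X₂) : Set (X₁ × X₂) := {p | p.1 ∈ a₁ ∨ p.2 ∈ a₂}

/-- Binary box product. -/
def boxProd₂ (L₁ : Set (Set X₁)) (L₂ : Set (Set X₂)) : Set (Set (X₁ × X₂)) :=
  {A | ∃ ω ⊆ {B | ∃ a₁ ∈ L₁, ∃ a₂ ∈ L₂, B = cylUnion₂ a₁ a₂}, ω.Nonempty ∧ A = ⋂₀ ω}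

/-- Binary Fraser product. -/
def fraserProd₂ (L₁ : Set (Set X₁)) (L₂ : Set (Set X₂)) : Set (Set (X₁ × X₂)) :=
  {R | (∀ p₁, {q | (p₁, q) ∈ R} ∈ L₂) ∧ (∀ p₂, {q | (q, p₂) ∈ R} ∈ L₁)}

/-- Binary weak tensor product: axioms P1–P3. -/
def IsWTP₂ (L₁ : Set (Set X₁)) (L₂ : Set (Set X₂)) (M : Set (Set (X₁ × X₂))) : Prop :=
  IsSCS M ∧ (∀ a₁ ∈ L₁, ∀ a₂ ∈ L₂, cylUnion₂ a₁ a₂ ∈ M) ∧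
  (∀ p₁ : X₁, ∀ A₂ : Set X₂, {p₁} ×ˢ A₂ ∈ M → A₂ ∈ L₂) ∧
  (∀ p₂ : X₂, ∀ A₁ : Set X₁, A₁ ×ˢ {p₂} ∈ M → A₁ ∈ L₁)

/-- The simple closure space `MO_Σ`, containing only `∅`, `Σ` and the singletons. -/
def MOspace (X : Type*) : Set (Set X) := {∅, univ} ∪ {A | ∃ p, A = {p}}

end Binary
/-- The weak tensor product `MO_{Σ₁} ∘ MO_{Σ₂}`: the box product together with all
three-element sets whose elements pairwise differ in both coordinates. -/
def circProd (X₁ X₂ : Type*) : Set (Set (X₁ × X₂)) :=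
  boxProd₂ (MOspace X₁) (MOspace X₂) ∪
  {R | ∃ a b c : X₁ × X₂, R = {a, b, c} ∧ a.1 ≠ b.1 ∧ a.1 ≠ c.1 ∧ b.1 ≠ c.1 ∧
      a.2 ≠ b.2 ∧ a.2 ≠ c.2 ∧ b.2 ≠ c.2}


/-!
A set `A ⊆ Σ₁ × Σ₂` belongs to `MO_{Σ₁} ∘ MO_{Σ₂}` exactly when it obeys three Horn rules
(`IsFlat 3`): two distinct points on a common line put the whole line into `A`; a cross together
with a point off it forces `A = univ`; a set of points pairwise differing in both coordinates has
at most three elements unless `A = univ`. Horn rules survive intersections, which gives the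
closure-space axiom, and P2, P3 are instances of the line rule. The covering property follows
from the exchange property (`q ∈ a ∨ p`, `q ∉ a` imply `p ∈ a ∨ q`), checked on the list of
flats `a`: `univ`, lines, crosses and diagonal sets of at most three points.
-/

theorem mem_MOspace_iff {X : Type*} {a : Set X} : a ∈ MOspace X ↔ a = univ ∨ a.Subsingleton := by
  simp only [MOspace, mem_union, mem_insert_iff, mem_singleton_iff]
  constructor
  · rintro ((rfl | rfl) | ⟨p, rfl⟩)
    exacts [Or.inr subsingleton_empty, Or.inl rfl, Or.inr subsingleton_singleton]
  · rintro (rfl | h)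
    · exact Or.inl (Or.inr rfl)
    · rcases h.eq_empty_or_singleton with rfl | h
      exacts [Or.inl (Or.inl rfl), Or.inr h]

theorem empty_mem_MOspace {X : Type*} : (∅ : Set X) ∈ MOspace X :=
  mem_MOspace_iff.2 (Or.inr subsingleton_empty)

theorem singleton_mem_MOspace {X : Type*} (x : X) : {x} ∈ MOspace X :=
  mem_MOspace_iff.2 (Or.inr subsingleton_singleton)

theorem eq_univ_of_mem_MOspace_of_ne {X : Type*} {a : Set X} (ha : a ∈ MOspace X) {x y : X}
    (hx : x ∈ a) (hy : y ∈ a) (hxy : x ≠ y) : a = univ :=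
  (mem_MOspace_iff.1 ha).resolve_right fun h => hxy (h hx hy)

section ClosureSpace

variable {σ : Type*} {L : Set (Set σ)}

theorem subset_sJoin (A : Set σ) : A ⊆ sJoin L A := fun _ hx _ hb => hb.2 hx

theorem sJoin_subset {A b : Set σ} (hb : b ∈ L) (hA : A ⊆ b) : sJoin L A ⊆ b :=
  sInter_subset_of_mem ⟨hb, hA⟩

/-- The exchange property at `a` and `p`, witnessed by `F`, which is then the join `a ∨ p`. -/
def ExchangeJoin (L : Set (Set σ)) (a : Set σ) (p : σ) (F : Set σ) : Prop :=
  F ∈ L ∧ insert p a ⊆ F ∧ ∀ q ∈ F, q ∉ a → ∀ b ∈ L, insert q a ⊆ b → p ∈ b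

theorem hasCovProp_of_exchangeJoin (h : ∀ a ∈ L, ∀ p ∉ a, ∃ F, ExchangeJoin L a p F) :
    HasCovProp L := by
  intro p a ha hpa
  obtain ⟨F, hF, hpaF, hexch⟩ := h a ha p hpa
  have hpJ : p ∈ sJoin L (insert p a) := subset_sJoin _ (mem_insert p a)
  refine ⟨ssubset_of_subset_not_subset ((subset_insert p a).trans (subset_sJoin _))
    fun hJ => hpa (hJ hpJ), fun c hc hac hcJ => ?_⟩
  by_cases hca : c ⊆ a
  · exact Or.inl (hca.antisymm hac)
  obtain ⟨q, hqc, hqa⟩ := not_subset.1 hca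
  have hpc : p ∈ c :=
    hexch q (sJoin_subset hF hpaF (hcJ hqc)) hqa c hc (insert_subset hqc hac)
  exact Or.inr (hcJ.antisymm (sJoin_subset hc (insert_subset hpc hac)))

theorem exchangeJoin_insert {a : Set σ} {p : σ} (h : insert p a ∈ L) :
    ExchangeJoin L a p (insert p a) := by
  refine ⟨h, subset_rfl, fun q hq hqa _ _ hqb => ?_⟩
  obtain rfl := hq.resolve_right hqa
  exact hqb (mem_insert q a)

theorem exchangeJoin_univ {a : Set σ} {p : σ} (hL : univ ∈ L)
    (h : ∀ q ∉ a, ∀ b ∈ L, insert q a ⊆ b → b = univ) : ExchangeJoin L a p univ :=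
  ⟨hL, subset_univ _, fun q _ hqa b hb hqb => (h q hqa b hb hqb).symm ▸ mem_univ p⟩

end ClosureSpace

section Product

variable {X₁ X₂ : Type*}

@[simp]
theorem mem_cylUnion₂ {a₁ : Set X₁} {a₂ : Set X₂} {r : X₁ × X₂} :
    r ∈ cylUnion₂ a₁ a₂ ↔ r.1 ∈ a₁ ∨ r.2 ∈ a₂ :=
  Iff.rfl

theorem cylUnion₂_univ_left (a₂ : Set X₂) : cylUnion₂ (univ : Set X₁) a₂ = univ :=
  eq_univ_of_forall fun _ => Or.inl trivial

theorem cylUnion₂_univ_right (a₁ : Set X₁) : cylUnion₂ a₁ (univ : Set X₂) = univ :=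
  eq_univ_of_forall fun _ => Or.inr trivial

theorem cylUnion₂_eq_union (a₁ : Set X₁) (a₂ : Set X₂) :
    cylUnion₂ a₁ a₂ = cylUnion₂ a₁ ∅ ∪ cylUnion₂ ∅ a₂ := by
  ext r
  simp

theorem cylUnion₂_mem_boxProd₂ {a₁ : Set X₁} {a₂ : Set X₂} (h₁ : a₁ ∈ MOspace X₁)
    (h₂ : a₂ ∈ MOspace X₂) : cylUnion₂ a₁ a₂ ∈ boxProd₂ (MOspace X₁) (MOspace X₂) :=
  ⟨{cylUnion₂ a₁ a₂}, singleton_subset_iff.2 ⟨a₁, h₁, a₂, h₂, rfl⟩, singleton_nonempty _,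
    (sInter_singleton _).symm⟩

theorem inter_cylUnion₂_mem_boxProd₂ {a₁ b₁ : Set X₁} {a₂ b₂ : Set X₂}
    (ha₁ : a₁ ∈ MOspace X₁) (ha₂ : a₂ ∈ MOspace X₂) (hb₁ : b₁ ∈ MOspace X₁)
    (hb₂ : b₂ ∈ MOspace X₂) :
    cylUnion₂ a₁ a₂ ∩ cylUnion₂ b₁ b₂ ∈ boxProd₂ (MOspace X₁) (MOspace X₂) :=
  ⟨{cylUnion₂ a₁ a₂, cylUnion₂ b₁ b₂}, pair_subset ⟨a₁, ha₁, a₂, ha₂, rfl⟩ ⟨b₁, hb₁, b₂, hb₂, rfl⟩,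
    insert_nonempty _ _, (sInter_pair _ _).symm⟩

def IsDiagonal (A : Set (X₁ × X₂)) : Prop :=
  InjOn Prod.fst A ∧ InjOn Prod.snd A

namespace IsDiagonal

variable {A : Set (X₁ × X₂)} {u v : X₁ × X₂}

theorem fst_ne (hA : IsDiagonal A) (hu : u ∈ A) (hv : v ∈ A) (huv : u ≠ v) : u.1 ≠ v.1 :=
  fun h => huv (hA.1 hu hv h)

theorem snd_ne (hA : IsDiagonal A) (hu : u ∈ A) (hv : v ∈ A) (huv : u ≠ v) : u.2 ≠ v.2 :=
  fun h => huv (hA.2 hu hv h)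

theorem insert (hA : IsDiagonal A) {p : X₁ × X₂} (hp : ∀ v ∈ A, p.1 ≠ v.1 ∧ p.2 ≠ v.2) :
    IsDiagonal (insert p A) := by
  have hpA : p ∉ A := fun h => (hp p h).1 rfl
  refine ⟨(injOn_insert hpA).2 ⟨hA.1, ?_⟩, (injOn_insert hpA).2 ⟨hA.2, ?_⟩⟩ <;>
    rintro ⟨v, hv, e⟩
  exacts [(hp v hv).1 e.symm, (hp v hv).2 e.symm]

end IsDiagonal

theorem isDiagonal_empty : IsDiagonal (∅ : Set (X₁ × X₂)) :=
  ⟨injOn_empty _, injOn_empty _⟩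

theorem isDiagonal_singleton (u : X₁ × X₂) : IsDiagonal {u} :=
  ⟨injOn_singleton _ _, injOn_singleton _ _⟩

/-- Horn rules satisfied by every element of `MO ⊼ MO` (with `n = 2`), and cutting out
`MO ∘ MO` exactly (with `n = 3`). -/
structure IsFlat (n : ℕ∞) (A : Set (X₁ × X₂)) : Prop where
  fst_line : ∀ u ∈ A, ∀ v ∈ A, u ≠ v → u.1 = v.1 → cylUnion₂ {u.1} ∅ ⊆ A
  snd_line : ∀ u ∈ A, ∀ v ∈ A, u ≠ v → u.2 = v.2 → cylUnion₂ ∅ {u.2} ⊆ A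
  cross : ∀ x y, cylUnion₂ {x} {y} ⊂ A → A = univ
  diagonal : ∀ S ⊆ A, IsDiagonal S → S.encard ≤ n ∨ A = univ

theorem IsFlat.mono {n m : ℕ∞} {A : Set (X₁ × X₂)} (hnm : n ≤ m) (hA : IsFlat n A) :
    IsFlat m A :=
  { hA with diagonal := fun S hS hd => (hA.diagonal S hS hd).imp_left (·.trans hnm) }

theorem isFlat_sInter {n : ℕ∞} {ω : Set (Set (X₁ × X₂))} (h : ∀ B ∈ ω, IsFlat n B) :
    IsFlat n (⋂₀ ω) where
  fst_line u hu v hv huv e :=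
    subset_sInter fun B hB => (h B hB).fst_line u (hu B hB) v (hv B hB) huv e
  snd_line u hu v hv huv e :=
    subset_sInter fun B hB => (h B hB).snd_line u (hu B hB) v (hv B hB) huv e
  cross x y hxy :=
    sInter_eq_univ.2 fun B hB => (h B hB).cross x y (hxy.trans_subset (sInter_subset_of_mem hB))
  diagonal S hS hd := by
    by_cases hn : S.encard ≤ n
    · exact Or.inl hn
    · exact Or.inr (sInter_eq_univ.2 fun B hB =>
        ((h B hB).diagonal S (hS.trans (sInter_subset_of_mem hB)) hd).resolve_left hn)

theorem isFlat_cylUnion₂ {a₁ : Set X₁} {a₂ : Set X₂} (h₁ : a₁ ∈ MOspace X₁)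
    (h₂ : a₂ ∈ MOspace X₂) : IsFlat 2 (cylUnion₂ a₁ a₂) where
  fst_line u hu v hv huv e r hr := by
    simp only [mem_cylUnion₂, mem_singleton_iff, mem_empty_iff_false, or_false] at hr hu hv ⊢
    by_cases hu₁ : u.1 ∈ a₁
    · exact Or.inl (hr ▸ hu₁)
    · rw [eq_univ_of_mem_MOspace_of_ne h₂ (hu.resolve_left hu₁) (hv.resolve_left (e ▸ hu₁))
        fun e' => huv (Prod.ext e e')]
      exact Or.inr trivial
  snd_line u hu v hv huv e r hr := by
    simp only [mem_cylUnion₂, mem_singleton_iff, mem_empty_iff_false, false_or] at hr hu hv ⊢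
    by_cases hu₂ : u.2 ∈ a₂
    · exact Or.inr (hr ▸ hu₂)
    · rw [eq_univ_of_mem_MOspace_of_ne h₁ (hu.resolve_right hu₂) (hv.resolve_right (e ▸ hu₂))
        fun e' => huv (Prod.ext e' e)]
      exact Or.inl trivial
  cross x y hxy := by
    obtain ⟨p, hp, hpxy⟩ := exists_of_ssubset hxy
    simp only [mem_cylUnion₂, mem_singleton_iff, not_or] at hp hpxy
    have hmem (r : X₁ × X₂) (hr : r.1 = x ∨ r.2 = y) : r.1 ∈ a₁ ∨ r.2 ∈ a₂ := hxy.1 (by simpa)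
    have hxy' := hmem (x, y) (Or.inl rfl)
    have hx := hmem (x, p.2) (Or.inl rfl)
    have hy := hmem (p.1, y) (Or.inr rfl)
    have : (x ∈ a₁ ∧ p.1 ∈ a₁) ∨ (y ∈ a₂ ∧ p.2 ∈ a₂) := by tauto
    rcases this with ⟨h, h'⟩ | ⟨h, h'⟩
    · rw [eq_univ_of_mem_MOspace_of_ne h₁ h h' (Ne.symm hpxy.1), cylUnion₂_univ_left]
    · rw [eq_univ_of_mem_MOspace_of_ne h₂ h h' (Ne.symm hpxy.2), cylUnion₂_univ_right]
  diagonal S hS hd := by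
    rcases mem_MOspace_iff.1 h₁ with rfl | s₁
    · exact Or.inr (cylUnion₂_univ_left _)
    rcases mem_MOspace_iff.1 h₂ with rfl | s₂
    · exact Or.inr (cylUnion₂_univ_right _)
    have hS' : S ⊆ {r ∈ S | r.1 ∈ a₁} ∪ {r ∈ S | r.2 ∈ a₂} :=
      fun r hr => (hS hr).imp (⟨hr, ·⟩) (⟨hr, ·⟩)
    have k₁ : {r ∈ S | r.1 ∈ a₁}.encard ≤ 1 :=
      encard_le_one_iff.2 fun u v hu hv => hd.1 hu.1 hv.1 (s₁ hu.2 hv.2)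
    have k₂ : {r ∈ S | r.2 ∈ a₂}.encard ≤ 1 :=
      encard_le_one_iff.2 fun u v hu hv => hd.2 hu.1 hv.1 (s₂ hu.2 hv.2)
    left
    calc S.encard ≤ _ := encard_le_encard hS'
      _ ≤ _ := encard_union_le _ _
      _ ≤ 1 + 1 := add_le_add k₁ k₂
      _ = 2 := one_add_one_eq_two

theorem IsDiagonal.isFlat {n : ℕ∞} {A : Set (X₁ × X₂)} (hA : IsDiagonal A) (hn : A.encard ≤ n) :
    IsFlat n A where
  fst_line u hu v hv huv e := absurd e (hA.fst_ne hu hv huv)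
  snd_line u hu v hv huv e := absurd e (hA.snd_ne hu hv huv)
  cross x y hxy := by
    obtain ⟨p, hp, hpxy⟩ := exists_of_ssubset hxy
    simp only [mem_cylUnion₂, mem_singleton_iff, not_or] at hpxy
    have hxp : ((x, p.2) : X₁ × X₂) ∈ A := hxy.1 (Or.inl rfl)
    exact (hA.snd_ne hxp hp (fun h => hpxy.1 (congrArg Prod.fst h).symm) rfl).elim
  diagonal S hS _ := Or.inl ((encard_le_encard hS).trans hn)

section Flat

variable {n : ℕ∞} {A : Set (X₁ × X₂)}

namespace IsFlat

theorem cross_subset_of_fst_line (hA : IsFlat n A) {x : X₁} (hx : cylUnion₂ {x} ∅ ⊆ A)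
    {p : X₁ × X₂} (hp : p ∈ A) (hpx : p.1 ≠ x) : cylUnion₂ {x} {p.2} ⊆ A := by
  have hrow := hA.snd_line (x, p.2) (hx (Or.inl rfl)) p hp
    (fun h => hpx (congrArg Prod.fst h).symm) rfl
  rw [cylUnion₂_eq_union]
  exact union_subset hx hrow

theorem cross_subset_of_snd_line (hA : IsFlat n A) {y : X₂} (hy : cylUnion₂ ∅ {y} ⊆ A)
    {p : X₁ × X₂} (hp : p ∈ A) (hpy : p.2 ≠ y) : cylUnion₂ {p.1} {y} ⊆ A := by
  have hcol := hA.fst_line (p.1, y) (hy (Or.inr rfl)) p hp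
    (fun h => hpy (congrArg Prod.snd h).symm) rfl
  rw [cylUnion₂_eq_union]
  exact union_subset hcol hy

theorem cross_subset (hA : IsFlat n A) {u v q : X₁ × X₂} (hu : u ∈ A) (hv : v ∈ A) (hq : q ∈ A)
    (h₁ : u.1 ≠ v.1) (h₂ : u.2 ≠ v.2) (hqu : q ≠ u) (hqv : q ≠ v)
    (hq' : q ∈ cylUnion₂ {u.1} {v.2}) : cylUnion₂ {u.1} {v.2} ⊆ A := by
  rcases hq' with hq' | hq'
  · exact hA.cross_subset_of_fst_line (hA.fst_line u hu q hq hqu.symm hq'.symm) hv h₁.symm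
  · exact hA.cross_subset_of_snd_line (hA.snd_line v hv q hq hqv.symm hq'.symm) hu h₂

theorem eq_of_fst_line_subset (hA : IsFlat n A) {x : X₁} (hx : cylUnion₂ {x} ∅ ⊆ A) :
    A = cylUnion₂ {x} ∅ ∨ (∃ y, A = cylUnion₂ {x} {y}) ∨ A = univ := by
  by_cases hAx : A ⊆ cylUnion₂ {x} ∅
  · exact Or.inl (hAx.antisymm hx)
  obtain ⟨p, hp, hpx⟩ := not_subset.1 hAx
  have hpx : p.1 ≠ x := by simpa using hpx
  have hc := hA.cross_subset_of_fst_line hx hp hpx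
  by_cases hAc : A ⊆ cylUnion₂ {x} {p.2}
  · exact Or.inr (Or.inl ⟨p.2, hAc.antisymm hc⟩)
  · exact Or.inr (Or.inr (hA.cross x p.2 (ssubset_of_subset_not_subset hc hAc)))

theorem eq_of_snd_line_subset (hA : IsFlat n A) {y : X₂} (hy : cylUnion₂ ∅ {y} ⊆ A) :
    A = cylUnion₂ ∅ {y} ∨ (∃ x, A = cylUnion₂ {x} {y}) ∨ A = univ := by
  by_cases hAy : A ⊆ cylUnion₂ ∅ {y}
  · exact Or.inl (hAy.antisymm hy)
  obtain ⟨p, hp, hpy⟩ := not_subset.1 hAy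
  have hpy : p.2 ≠ y := by simpa using hpy
  have hc := hA.cross_subset_of_snd_line hy hp hpy
  by_cases hAc : A ⊆ cylUnion₂ {p.1} {y}
  · exact Or.inr (Or.inl ⟨p.1, hAc.antisymm hc⟩)
  · exact Or.inr (Or.inr (hA.cross p.1 y (ssubset_of_subset_not_subset hc hAc)))

theorem classify (hA : IsFlat n A) :
    A = univ ∨ (∃ x, A = cylUnion₂ {x} ∅) ∨ (∃ y, A = cylUnion₂ ∅ {y}) ∨
      (∃ x y, A = cylUnion₂ {x} {y}) ∨ (IsDiagonal A ∧ A.encard ≤ n) := by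
  by_cases hd : IsDiagonal A
  · exact (hA.diagonal A subset_rfl hd).symm.imp_right fun h => Or.inr (Or.inr (Or.inr ⟨hd, h⟩))
  obtain ⟨u, hu, v, hv, huv, e | e⟩ : ∃ u ∈ A, ∃ v ∈ A, u ≠ v ∧ (u.1 = v.1 ∨ u.2 = v.2) := by
    by_contra! h
    exact hd ⟨fun u hu v hv e => not_not.1 fun huv => (h u hu v hv huv).1 e,
      fun u hu v hv e => not_not.1 fun huv => (h u hu v hv huv).2 e⟩
  · rcases hA.eq_of_fst_line_subset (hA.fst_line u hu v hv huv e) with h | ⟨y, h⟩ | h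
    exacts [Or.inr (Or.inl ⟨_, h⟩), Or.inr (Or.inr (Or.inr (Or.inl ⟨_, _, h⟩))), Or.inl h]
  · rcases hA.eq_of_snd_line_subset (hA.snd_line u hu v hv huv e) with h | ⟨x, h⟩ | h
    exacts [Or.inr (Or.inr (Or.inl ⟨_, h⟩)), Or.inr (Or.inr (Or.inr (Or.inl ⟨_, _, h⟩))), Or.inl h]

end IsFlat

end Flat

end Product

section CircProd

variable {X₁ X₂ : Type*}

theorem IsDiagonal.mem_boxProd₂ {A : Set (X₁ × X₂)} (hA : IsDiagonal A) (hn : A.encard ≤ 2) :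
    A ∈ boxProd₂ (MOspace X₁) (MOspace X₂) := by
  rcases hn.eq_or_lt with h2 | h1
  · obtain ⟨u, v, huv, rfl⟩ := encard_eq_two.1 h2
    have h₁ := hA.fst_ne (by simp) (by simp) huv
    have h₂ := hA.snd_ne (by simp) (by simp) huv
    convert inter_cylUnion₂_mem_boxProd₂ (singleton_mem_MOspace u.1) (singleton_mem_MOspace v.2)
      (singleton_mem_MOspace v.1) (singleton_mem_MOspace u.2) using 1
    ext r
    simp only [mem_insert_iff, mem_singleton_iff, mem_inter_iff, mem_cylUnion₂, Prod.ext_iff]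
    grind
  rcases encard_le_one_iff_eq.1 (Order.le_of_lt_add_one h1) with rfl | ⟨u, rfl⟩
  · convert cylUnion₂_mem_boxProd₂ (@empty_mem_MOspace X₁) (@empty_mem_MOspace X₂)
    ext r
    simp
  · convert inter_cylUnion₂_mem_boxProd₂ (singleton_mem_MOspace u.1) empty_mem_MOspace
      empty_mem_MOspace (singleton_mem_MOspace u.2) using 1
    ext r
    simp [Prod.ext_iff]

theorem IsDiagonal.mem_circProd {A : Set (X₁ × X₂)} (hA : IsDiagonal A) (hn : A.encard ≤ 3) :
    A ∈ circProd X₁ X₂ := by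
  rcases hn.eq_or_lt with h3 | h2
  · obtain ⟨u, v, w, huv, huw, hvw, rfl⟩ := encard_eq_three.1 h3
    exact Or.inr ⟨u, v, w, rfl, hA.fst_ne (by simp) (by simp) huv,
      hA.fst_ne (by simp) (by simp) huw, hA.fst_ne (by simp) (by simp) hvw,
      hA.snd_ne (by simp) (by simp) huv, hA.snd_ne (by simp) (by simp) huw,
      hA.snd_ne (by simp) (by simp) hvw⟩
  · exact Or.inl (hA.mem_boxProd₂ (Order.le_of_lt_add_one h2))

theorem mem_circProd_iff {A : Set (X₁ × X₂)} : A ∈ circProd X₁ X₂ ↔ IsFlat 3 A := by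
  constructor
  · rintro (⟨ω, hω, -, rfl⟩ | ⟨u, v, w, rfl, h₁, h₂, h₃, h₄, h₅, h₆⟩)
    · refine isFlat_sInter fun B hB => ?_
      obtain ⟨a₁, ha₁, a₂, ha₂, rfl⟩ := hω hB
      exact (isFlat_cylUnion₂ ha₁ ha₂).mono (by norm_num)
    · have hd : IsDiagonal ({u, v, w} : Set (X₁ × X₂)) :=
        ((isDiagonal_singleton w).insert (by simp [h₃, h₆])).insert (by simp [h₁, h₂, h₄, h₅])
      exact hd.isFlat ((encard_insert_le _ _).trans (by
        grw [encard_pair fun h => h₃ (congrArg Prod.fst h)]; norm_num))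
  · intro hA
    rcases hA.classify with rfl | ⟨x, rfl⟩ | ⟨y, rfl⟩ | ⟨x, y, rfl⟩ | ⟨hd, hn⟩
    · rw [← cylUnion₂_univ_left (∅ : Set X₂)]
      exact Or.inl (cylUnion₂_mem_boxProd₂ (mem_MOspace_iff.2 (Or.inl rfl)) empty_mem_MOspace)
    · exact Or.inl (cylUnion₂_mem_boxProd₂ (singleton_mem_MOspace x) empty_mem_MOspace)
    · exact Or.inl (cylUnion₂_mem_boxProd₂ empty_mem_MOspace (singleton_mem_MOspace y))
    · exact Or.inl (cylUnion₂_mem_boxProd₂ (singleton_mem_MOspace x) (singleton_mem_MOspace y))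
    · exact hd.mem_circProd hn

theorem isSCS_circProd : IsSCS (circProd X₁ X₂) :=
  ⟨fun _ hω => mem_circProd_iff.2 (isFlat_sInter fun _ hB => mem_circProd_iff.1 (hω hB)),
    isDiagonal_empty.mem_circProd (by simp),
    fun p => (isDiagonal_singleton p).mem_circProd (by simp)⟩

theorem univ_mem_circProd : (univ : Set (X₁ × X₂)) ∈ circProd X₁ X₂ := by
  simpa using isSCS_circProd.1 (∅ : Set (Set (X₁ × X₂))) (empty_subset _)

theorem mem_MOspace_of_singleton_prod_mem_circProd {p₁ : X₁} {A₂ : Set X₂}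
    (h : {p₁} ×ˢ A₂ ∈ circProd X₁ X₂) : A₂ ∈ MOspace X₂ := by
  refine mem_MOspace_iff.2 (or_iff_not_imp_right.2 fun hA₂ => ?_)
  obtain ⟨y, hy, y', hy', hyy'⟩ := not_subsingleton_iff.1 hA₂
  have hcol := (mem_circProd_iff.1 h).fst_line (p₁, y) ⟨rfl, hy⟩ (p₁, y') ⟨rfl, hy'⟩
    (fun e => hyy' (congrArg Prod.snd e)) rfl
  exact eq_univ_of_forall fun z => (hcol (Or.inl rfl : (p₁, z) ∈ cylUnion₂ {p₁} ∅)).2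

theorem mem_MOspace_of_prod_singleton_mem_circProd {p₂ : X₂} {A₁ : Set X₁}
    (h : A₁ ×ˢ {p₂} ∈ circProd X₁ X₂) : A₁ ∈ MOspace X₁ := by
  refine mem_MOspace_iff.2 (or_iff_not_imp_right.2 fun hA₁ => ?_)
  obtain ⟨x, hx, x', hx', hxx'⟩ := not_subsingleton_iff.1 hA₁
  have hrow := (mem_circProd_iff.1 h).snd_line (x, p₂) ⟨hx, rfl⟩ (x', p₂) ⟨hx', rfl⟩
    (fun e => hxx' (congrArg Prod.fst e)) rfl
  exact eq_univ_of_forall fun z => (hrow (Or.inr rfl : (z, p₂) ∈ cylUnion₂ ∅ {p₂})).1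

theorem isWTP₂_circProd : IsWTP₂ (MOspace X₁) (MOspace X₂) (circProd X₁ X₂) :=
  ⟨isSCS_circProd, fun _ h₁ _ h₂ => Or.inl (cylUnion₂_mem_boxProd₂ h₁ h₂),
    fun _ _ => mem_MOspace_of_singleton_prod_mem_circProd,
    fun _ _ => mem_MOspace_of_prod_singleton_mem_circProd⟩

theorem IsFlat.eq_univ_of_encard_eq_three {b T : Set (X₁ × X₂)} (hb : IsFlat 3 b) (hTb : T ⊆ b)
    (hT : IsDiagonal T) (h3 : T.encard = 3) {q : X₁ × X₂} (hq : q ∈ b) (hqT : q ∉ T) :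
    b = univ := by
  have h3' : ¬T.encard ≤ 2 := by rw [h3]; norm_num
  rcases hb.classify with h | ⟨x, rfl⟩ | ⟨y, rfl⟩ | ⟨x, y, rfl⟩ | ⟨-, hn⟩
  · exact h
  · exact ((isFlat_cylUnion₂ (singleton_mem_MOspace x) empty_mem_MOspace).diagonal T hTb
      hT).resolve_left h3'
  · exact ((isFlat_cylUnion₂ empty_mem_MOspace (singleton_mem_MOspace y)).diagonal T hTb
      hT).resolve_left h3'
  · exact ((isFlat_cylUnion₂ (singleton_mem_MOspace x) (singleton_mem_MOspace y)).diagonal T hTb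
      hT).resolve_left h3'
  · have := (encard_le_encard (insert_subset hq hTb)).trans hn
    rw [encard_insert_of_notMem hqT, h3] at this
    norm_num at this

theorem exchangeJoin_fst_line (x : X₁) (p : X₁ × X₂) :
    ExchangeJoin (circProd X₁ X₂) (cylUnion₂ {x} ∅) p (cylUnion₂ {x} {p.2}) := by
  refine ⟨Or.inl (cylUnion₂_mem_boxProd₂ (singleton_mem_MOspace x) (singleton_mem_MOspace p.2)),
    insert_subset (Or.inr rfl) fun r hr => Or.inl (by simpa using hr), fun q hq hqx b hb hqb => ?_⟩
  have hqx : q.1 ≠ x := by simpa using hqx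
  have hqp : q.2 = p.2 := by simpa [hqx] using hq
  have hcross := (mem_circProd_iff.1 hb).cross_subset_of_fst_line ((subset_insert _ _).trans hqb)
    (hqb (mem_insert q _)) hqx
  exact hcross (Or.inr hqp.symm)

theorem exchangeJoin_snd_line (y : X₂) (p : X₁ × X₂) :
    ExchangeJoin (circProd X₁ X₂) (cylUnion₂ ∅ {y}) p (cylUnion₂ {p.1} {y}) := by
  refine ⟨Or.inl (cylUnion₂_mem_boxProd₂ (singleton_mem_MOspace p.1) (singleton_mem_MOspace y)),
    insert_subset (Or.inl rfl) fun r hr => Or.inr (by simpa using hr), fun q hq hqy b hb hqb => ?_⟩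
  have hqy : q.2 ≠ y := by simpa using hqy
  have hqp : q.1 = p.1 := by simpa [hqy] using hq
  have hcross := (mem_circProd_iff.1 hb).cross_subset_of_snd_line ((subset_insert _ _).trans hqb)
    (hqb (mem_insert q _)) hqy
  exact hcross (Or.inl hqp.symm)

theorem exchangeJoin_cross {x : X₁} {y : X₂} (p : X₁ × X₂) :
    ExchangeJoin (circProd X₁ X₂) (cylUnion₂ {x} {y}) p univ :=
  exchangeJoin_univ univ_mem_circProd fun q hq _ hb hqb => (mem_circProd_iff.1 hb).cross x y
    (ssubset_of_subset_not_subset ((subset_insert _ _).trans hqb)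
      fun h => hq (h (hqb (mem_insert q _))))

theorem exchangeJoin_singleton_of_fst_eq {u p : X₁ × X₂} (e : p.1 = u.1) :
    ExchangeJoin (circProd X₁ X₂) {u} p (cylUnion₂ {u.1} ∅) := by
  refine ⟨Or.inl (cylUnion₂_mem_boxProd₂ (singleton_mem_MOspace u.1) empty_mem_MOspace),
    pair_subset (Or.inl e) (Or.inl rfl), fun q hq hqu b hb hqb => ?_⟩
  have hq : q.1 = u.1 := by simpa using hq
  exact (mem_circProd_iff.1 hb).fst_line u (hqb (by simp)) q (hqb (mem_insert q _))
    (Ne.symm hqu) hq.symm (Or.inl e)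

theorem exchangeJoin_singleton_of_snd_eq {u p : X₁ × X₂} (e : p.2 = u.2) :
    ExchangeJoin (circProd X₁ X₂) {u} p (cylUnion₂ ∅ {u.2}) := by
  refine ⟨Or.inl (cylUnion₂_mem_boxProd₂ empty_mem_MOspace (singleton_mem_MOspace u.2)),
    pair_subset (Or.inr e) (Or.inr rfl), fun q hq hqu b hb hqb => ?_⟩
  have hq : q.2 = u.2 := by simpa using hq
  exact (mem_circProd_iff.1 hb).snd_line u (hqb (by simp)) q (hqb (mem_insert q _))
    (Ne.symm hqu) hq.symm (Or.inr e)

theorem exchangeJoin_pair {u v p : X₁ × X₂} (h₁ : u.1 ≠ v.1) (h₂ : u.2 ≠ v.2)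
    (hp : p ∈ cylUnion₂ {u.1} {v.2}) :
    ExchangeJoin (circProd X₁ X₂) {u, v} p (cylUnion₂ {u.1} {v.2}) := by
  refine ⟨Or.inl (cylUnion₂_mem_boxProd₂ (singleton_mem_MOspace u.1) (singleton_mem_MOspace v.2)),
    insert_subset hp (pair_subset (Or.inl rfl) (Or.inr rfl)), fun q hq hquv b hb hqb => ?_⟩
  simp only [mem_insert_iff, mem_singleton_iff, not_or] at hquv
  exact (mem_circProd_iff.1 hb).cross_subset (hqb (by simp)) (hqb (by simp))
    (hqb (mem_insert q _)) h₁ h₂ hquv.1 hquv.2 hq hp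

theorem exists_exchangeJoin_of_isDiagonal {a : Set (X₁ × X₂)} (ha : IsDiagonal a)
    (hn : a.encard ≤ 3) {p : X₁ × X₂} (hp : p ∉ a) : ∃ F, ExchangeJoin (circProd X₁ X₂) a p F := by
  rcases hn.eq_or_lt with h3 | h2
  · exact ⟨univ, exchangeJoin_univ univ_mem_circProd fun q hq b hb hqb =>
      (mem_circProd_iff.1 hb).eq_univ_of_encard_eq_three ((subset_insert _ _).trans hqb) ha h3
        (hqb (mem_insert q _)) hq⟩
  replace h2 : a.encard ≤ 2 := Order.le_of_lt_add_one h2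
  by_cases hcol : ∃ u ∈ a, p.1 = u.1 ∨ p.2 = u.2
  swap
  · push Not at hcol
    refine ⟨_, exchangeJoin_insert ((ha.insert hcol).mem_circProd ?_)⟩
    grw [encard_insert_le, h2]
    norm_num
  obtain ⟨u, hu, e⟩ := hcol
  by_cases hau : a ⊆ {u}
  · obtain rfl : a = {u} := hau.antisymm (singleton_subset_iff.2 hu)
    rcases e with e | e
    exacts [⟨_, exchangeJoin_singleton_of_fst_eq e⟩, ⟨_, exchangeJoin_singleton_of_snd_eq e⟩]
  obtain ⟨v, hv, hvu⟩ := not_subset.1 hau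
  have huv : u ≠ v := Ne.symm hvu
  obtain rfl : {u, v} = a :=
    (toFinite _).eq_of_subset_of_encard_le (pair_subset hu hv) (h2.trans_eq (encard_pair huv).symm)
  rcases e with e | e
  · exact ⟨_, exchangeJoin_pair (ha.fst_ne (by simp) (by simp) huv)
      (ha.snd_ne (by simp) (by simp) huv) (Or.inl e)⟩
  · rw [pair_comm]
    exact ⟨_, exchangeJoin_pair (ha.fst_ne (by simp) (by simp) huv.symm)
      (ha.snd_ne (by simp) (by simp) huv.symm) (Or.inr e)⟩

theorem exists_exchangeJoin_circProd {a : Set (X₁ × X₂)} (ha : a ∈ circProd X₁ X₂)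
    {p : X₁ × X₂} (hp : p ∉ a) : ∃ F, ExchangeJoin (circProd X₁ X₂) a p F := by
  rcases (mem_circProd_iff.1 ha).classify with rfl | ⟨x, rfl⟩ | ⟨y, rfl⟩ | ⟨x, y, rfl⟩ | ⟨hd, hn⟩
  · exact absurd (mem_univ p) hp
  · exact ⟨_, exchangeJoin_fst_line x p⟩
  · exact ⟨_, exchangeJoin_snd_line y p⟩
  · exact ⟨_, exchangeJoin_cross p⟩
  · exact exists_exchangeJoin_of_isDiagonal hd hn hp

end CircProd

theorem stmt_18_general {X₁ X₂ : Type*} :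
    IsWTP₂ (MOspace X₁) (MOspace X₂) (circProd X₁ X₂) ∧
      HasCovProp (circProd X₁ X₂) :=
  ⟨isWTP₂_circProd, hasCovProp_of_exchangeJoin fun _ ha _ hp => exists_exchangeJoin_circProd ha hp⟩

/-- `MO_{Σ₁} ∘ MO_{Σ₂}` is a weak tensor product of `MO_{Σ₁}` and
`MO_{Σ₂}` having the covering property. -/
theorem stmt_18 {X₁ X₂ : Type*} [Nonempty X₁] [Nonempty X₂] :
    IsWTP₂ (MOspace X₁) (MOspace X₂) (circProd X₁ X₂) ∧
      HasCovProp (circProd X₁ X₂) :=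
  stmt_18_general
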